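/- arXiv:2605.10852 — 5 statements merged into one kernel-verified Lean document; each statement's English description precedes it below -/
import Mathlib

section
/- Fix k ≥ 2 and 1 ≤ m ≤ k−1. Define the DFA A on state set {1,…,k} over alphabet {a,b,c} where a acts as the k-cycle (1 2 … k), b acts as the transposition (1 2), c acts as the identity, with initial state 1 and final set F = {1,…,m}. Then A is a minimal DFA: every state is reachable from 1, and any two distinct states are distinguishable (there is a word sending one into F and the other out of F). -/
/-! With states numbered from `0`, the letter `a` acts as `s ↦ s + 1` on `Fin k`, so `a`
alone reaches every state and `a ^ (-p)` moves a pair `p ≠ q` to `0, q - p` with `q - p ≠ 0`.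
The word `ab` acts as `s ↦ swap 0 1 (s + 1)`: it fixes the final state `0` and shifts
`1, …, k - 2` up by one, so a power of `ab` sends `q - p` to the non-final state `k - 1` while
keeping `0` in place. -/

/-- Transition function of the quotient-source automaton: letter 0 acts as the
k-cycle, letter 1 as the transposition (1 2), letter 2 as the identity. -/
def qDelta (k : ℕ) (hk : 2 ≤ k) : Fin k → Fin 3 → Fin k :=
  fun q x =>
    if x = 0 then finRotate k q
    else if x = 1 then Equiv.swap (⟨0, by omega⟩ : Fin k) ⟨1, by omega⟩ q
    else q

theorem List.foldl_replicate {α β : Type*} (f : β → α → β) (a : α) (t : ℕ) (b : β) :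
    (List.replicate t a).foldl f b = (fun s => f s a)^[t] b := by
  induction t generalizing b with
  | zero => rfl
  | succ t ih => rw [List.replicate_succ, List.foldl_cons, ih, Function.iterate_succ_apply]

namespace QDelta

open Fin.NatCast

def abMap {n : ℕ} (s : Fin (n + 2)) : Fin (n + 2) := Equiv.swap 0 1 (s + 1)

variable {n : ℕ}

lemma abMap_zero : abMap (0 : Fin (n + 2)) = 0 := by
  simp [abMap]

lemma val_abMap {j : Fin (n + 2)} (h₁ : 1 ≤ j.val) (h₂ : j.val < n + 1) :
    (abMap j).val = j.val + 1 := by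
  have hsucc : (j + 1).val = j.val + 1 := by
    rw [Fin.val_add_one_of_lt' (by omega)]
  rw [abMap, Equiv.swap_apply_of_ne_of_ne, hsucc]
  · exact Fin.ne_of_val_ne (by rw [hsucc, Fin.val_zero]; omega)
  · exact Fin.ne_of_val_ne (by rw [hsucc, Fin.val_one]; omega)

lemma val_abMap_iterate (t : ℕ) {j : Fin (n + 2)} (h₁ : 1 ≤ j.val) (h₂ : j.val + t ≤ n + 1) :
    (abMap^[t] j).val = j.val + t := by
  induction t generalizing j with
  | zero => rfl
  | succ t ih =>
    rw [Function.iterate_succ_apply, ih (by rw [val_abMap h₁ (by omega)]; omega)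
      (by rw [val_abMap h₁ (by omega)]; omega), val_abMap h₁ (by omega)]
    omega

variable (hk : 2 ≤ n + 2)

lemma qDelta_rotate (q : Fin (n + 2)) : qDelta (n + 2) hk q 0 = q + 1 := by
  simp [qDelta]

lemma foldl_qDelta_ab (q : Fin (n + 2)) : [0, 1].foldl (qDelta (n + 2) hk) q = abMap q := by
  simp [qDelta, abMap]

lemma foldl_qDelta_rotate_pow (t : ℕ) (q : Fin (n + 2)) :
    (List.replicate t 0).foldl (qDelta (n + 2) hk) q = q + (t : Fin (n + 2)) := by
  simp only [List.foldl_replicate, qDelta_rotate, add_right_iterate_apply, nsmul_one]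

lemma foldl_qDelta_ab_pow (t : ℕ) (q : Fin (n + 2)) :
    (List.replicate t [0, 1]).flatten.foldl (qDelta (n + 2) hk) q = abMap^[t] q := by
  simp only [List.foldl_flatten, List.foldl_replicate, foldl_qDelta_ab]

end QDelta

open QDelta in
/-- The automaton A with final set {1,…,m} is minimal: all states reachable
from the initial state, and distinct states are distinguishable. -/
theorem stmt_12 (k m : ℕ) (hk : 2 ≤ k) (hm1 : 1 ≤ m) (hm2 : m ≤ k - 1) :
    (∀ q : Fin k, ∃ w : List (Fin 3), w.foldl (qDelta k hk) ⟨0, by omega⟩ = q) ∧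
      (∀ p q : Fin k, p ≠ q → ∃ w : List (Fin 3),
        ¬(w.foldl (qDelta k hk) p ∈ {x : Fin k | x.val < m} ↔
          w.foldl (qDelta k hk) q ∈ {x : Fin k | x.val < m})) := by
  obtain ⟨n, rfl⟩ : ∃ n, k = n + 2 := ⟨k - 2, by omega⟩
  refine ⟨fun q => ⟨List.replicate q.val 0, ?_⟩, fun p q hpq => ?_⟩
  · rw [foldl_qDelta_rotate_pow]
    exact (zero_add _).trans (Fin.cast_val_eq_self q)
  have hqp : 1 ≤ (q - p).val := Fin.pos_iff_ne_zero.mpr (sub_ne_zero.mpr hpq.symm)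
  refine ⟨List.replicate (-p).val 0 ++ (List.replicate (n + 1 - (q - p).val) [0, 1]).flatten, ?_⟩
  have htop : (q - p).val + (n + 1 - (q - p).val) ≤ n + 1 := by omega
  simp only [List.foldl_append, foldl_qDelta_rotate_pow, Fin.cast_val_eq_self, foldl_qDelta_ab_pow,
    add_neg_cancel, ← sub_eq_add_neg, Function.iterate_fixed abMap_zero, Set.mem_ofPred_eq,
    Fin.val_zero, val_abMap_iterate _ hqp htop]
  omega
end

section
/- Fix k ≥ 2. The DFA on state set {1,…,k} over alphabet {a,b,c}, with a acting as the k-cycle (1 2 … k), b as the transposition (1 2), c as the identity, initial state 1 and final set {1,…,k−1}, is minimal; hence the accepting-state complexity of its language is k−1. -/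
namespace DFA

variable {α σ σ' : Type*}

theorem acceptsFrom_eval_eq_of_accepts_eq {M : DFA α σ} {M' : DFA α σ'}
    (h : M'.accepts = M.accepts) (x : List α) :
    M'.acceptsFrom (M'.eval x) = M.acceptsFrom (M.eval x) := by
  ext y
  simp only [mem_acceptsFrom, eval, ← evalFrom_of_append]
  exact Set.ext_iff.mp h (x ++ y)

theorem ncard_accept_le_of_accepts_eq [Finite σ'] (M : DFA α σ) (M' : DFA α σ')
    (hreach : Function.Surjective M.eval) (hdist : Function.Injective M.acceptsFrom)
    (h : M'.accepts = M.accepts) : M.accept.ncard ≤ M'.accept.ncard := by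
  choose u hu using hreach
  have hquot (q : σ) : M'.acceptsFrom (M'.eval (u q)) = M.acceptsFrom q := by
    rw [acceptsFrom_eval_eq_of_accepts_eq h, hu]
  refine Set.ncard_le_ncard_of_injOn (fun q => M'.eval (u q)) (fun q hq => ?_)
    (fun p _ q _ hpq => hdist ?_) (Set.toFinite _)
  · have : [] ∈ M.acceptsFrom q := hq
    rwa [← hquot] at this
  · rw [← hquot, ← hquot]
    exact congrArg _ hpq

end DFA

section CycleSwap

variable (k : ℕ) (hk : 2 ≤ k)

def cycleSwapDFA : DFA (Fin 3) (Fin k) where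
  step := qDelta k hk
  start := ⟨0, by omega⟩
  accept := {x | x.val < k - 1}

variable [NeZero k]

theorem qDelta_zero (p : Fin k) : qDelta k hk p 0 = p + 1 := by
  simp [qDelta, finRotate_apply]

open Fin.NatCast in
theorem cycleSwapDFA_evalFrom_replicate_zero (p : Fin k) (m : ℕ) :
    (cycleSwapDFA k hk).evalFrom p (List.replicate m 0) = p + m := by
  induction m generalizing p with
  | zero => simp
  | succ m ih =>
    rw [List.replicate_succ, DFA.evalFrom_cons]
    simp only [cycleSwapDFA, qDelta_zero] at ih ⊢
    rw [ih, Nat.cast_succ, add_comm (m : Fin k), add_assoc]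

theorem cycleSwapDFA_eval_surjective : Function.Surjective (cycleSwapDFA k hk).eval := by
  intro q
  refine ⟨List.replicate q.val 0, ?_⟩
  rw [DFA.eval, cycleSwapDFA_evalFrom_replicate_zero]
  exact (zero_add _).trans (Fin.cast_val_eq_self q)

theorem cycleSwapDFA_exists_separating_word {p q : Fin k} (hpq : p ≠ q) :
    ∃ w, (cycleSwapDFA k hk).evalFrom p w ∉ (cycleSwapDFA k hk).accept ∧
      (cycleSwapDFA k hk).evalFrom q w ∈ (cycleSwapDFA k hk).accept := by
  set last : Fin k := ⟨k - 1, by omega⟩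
  refine ⟨List.replicate (last - p).val 0, ?_, ?_⟩ <;>
    simp only [cycleSwapDFA_evalFrom_replicate_zero, Fin.cast_val_eq_self]
  · simp [cycleSwapDFA, last]
  · have hne : q + (last - p) ≠ last := by
      intro h
      exact hpq (add_right_cancel (h.trans (add_sub_cancel p last).symm)).symm
    have hlt := (q + (last - p)).isLt
    simp only [cycleSwapDFA, Set.mem_ofPred_eq]
    exact lt_of_le_of_ne (by omega) fun h => hne (Fin.ext h)

theorem cycleSwapDFA_acceptsFrom_injective :
    Function.Injective (cycleSwapDFA k hk).acceptsFrom := by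
  intro p q h
  by_contra hpq
  obtain ⟨w, hp, hq⟩ := cycleSwapDFA_exists_separating_word k hk hpq
  have : w ∈ (cycleSwapDFA k hk).acceptsFrom p := h ▸ hq
  exact hp this

end CycleSwap

theorem Fin.ncard_setOf_val_lt (n m : ℕ) : {i : Fin n | i.val < m}.ncard = min n m := by
  rw [Set.ncard_eq_toFinset_card', Set.toFinset_ofPred, Fin.card_filter_val_lt]

/-- The DFA with final set {1,…,k-1} is minimal, and the accepting-state
complexity of its language is k-1: it has k-1 final states, and every DFA
for the same language has at least k-1 final states. -/
theorem stmt_15 (k : ℕ) (hk : 2 ≤ k) :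
    (∀ q : Fin k, ∃ w : List (Fin 3), w.foldl (qDelta k hk) ⟨0, by omega⟩ = q) ∧
      (∀ p q : Fin k, p ≠ q → ∃ w : List (Fin 3),
        ¬(w.foldl (qDelta k hk) p ∈ {x : Fin k | x.val < k - 1} ↔
          w.foldl (qDelta k hk) q ∈ {x : Fin k | x.val < k - 1})) ∧
      ({x : Fin k | x.val < k - 1}).ncard = k - 1 ∧
      (∀ (Q' : Type) [Fintype Q'] (δ' : Q' → Fin 3 → Q') (s' : Q') (F' : Set Q'),
        {w : List (Fin 3) | w.foldl δ' s' ∈ F'} =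
          {w : List (Fin 3) |
            w.foldl (qDelta k hk) ⟨0, by omega⟩ ∈ {x : Fin k | x.val < k - 1}} →
        k - 1 ≤ F'.ncard) := by
  have : NeZero k := ⟨by omega⟩
  have hcard : {x : Fin k | x.val < k - 1}.ncard = k - 1 := by
    rw [Fin.ncard_setOf_val_lt]
    omega
  refine ⟨cycleSwapDFA_eval_surjective k hk, fun p q hpq => ?_, hcard, ?_⟩
  · obtain ⟨w, hp, hq⟩ := cycleSwapDFA_exists_separating_word k hk hpq
    exact ⟨w, fun hiff => hp (hiff.mpr hq)⟩
  · intro Q' _ δ' s' F' hL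
    rw [← hcard]
    exact DFA.ncard_accept_le_of_accepts_eq (cycleSwapDFA k hk) ⟨δ', s', F'⟩
      (cycleSwapDFA_eval_surjective k hk) (cycleSwapDFA_acceptsFrom_injective k hk) hL
end

section
/- Let A be a minimal DFA with final set F. Then the accepting-state complexity of L(A) equals |F|: for every DFA A' with L(A') = L(A), the number of final states of A' is at least |F|. -/
/-- For a minimal DFA with final set F, every DFA accepting the same language
has at least |F| final states. -/
theorem stmt_16 {Q A : Type*} [Fintype Q] (δ : Q → A → Q) (s : Q) (F : Set Q)
    (hreach : ∀ q : Q, ∃ w : List A, w.foldl δ s = q)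
    (hdist : ∀ p q : Q, p ≠ q →
      ∃ w : List A, ¬(w.foldl δ p ∈ F ↔ w.foldl δ q ∈ F))
    {Q' : Type*} [Fintype Q'] (δ' : Q' → A → Q') (s' : Q') (F' : Set Q')
    (hlang : {w : List A | w.foldl δ' s' ∈ F'} = {w : List A | w.foldl δ s ∈ F}) :
    F.ncard ≤ F'.ncard := by
  have hl : ∀ w : List A, w.foldl δ' s' ∈ F' ↔ w.foldl δ s ∈ F := fun w =>
    Set.ext_iff.mp hlang w
  choose wit hwit using hreach
  apply Set.ncard_le_ncard_of_injOn (fun q => (wit q).foldl δ' s')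
  · intro q hq
    exact (hl (wit q)).mpr (by rwa [hwit])
  · intro p hp q hq hfe
    by_contra hne
    obtain ⟨w, hw⟩ := hdist p q hne
    apply hw
    have e1 := hl (wit p ++ w)
    have e2 := hl (wit q ++ w)
    simp only [List.foldl_append, hwit] at e1 e2
    simp only at hfe
    rw [← e1, ← e2, hfe]
end

section
/- For t ≥ 1, the unary cyclic DFA C_t with states {1,…,t+1} over alphabet {a}, transition p·a ≡ p+1 mod t+1, initial state 1, and final set {1,…,t}, is a minimal permutation automaton; hence the language L(C_t) has accepting-state complexity exactly t. -/
/-!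
A word of length `k` moves the state `p` of `C_t` to `p + k` in `Fin (t + 1)`, so `C_t` is a
rotation, every state is reachable from `0`, and two states `p ≠ q` are separated by the word
sending `p` to the unique rejecting state `Fin.last t`. For the lower bound, in any DFA for the
same language the states reached by `a^i`, `i < t`, are accepting and pairwise distinct: if `a^i`
and `a^j` led to the same state, so would `a^(d+i)` and `a^(d+j)` for the `d` with
`d + i ≡ t`, forcing `i ≡ j mod (t + 1)`.
-/

open Function Fin.NatCast

theorem List.foldl_unit {Q : Type*} (δ : Q → Unit → Q) (q : Q) (w : List Unit) :
    w.foldl δ q = (fun p => δ p ())^[w.length] q :=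
  List.foldl_const (fun p => δ p ()) q w

theorem Fin.setOf_val_lt_eq_compl_last (t : ℕ) :
    {p : Fin (t + 1) | p.val < t} = {Fin.last t}ᶜ := by
  ext p
  simp only [Set.mem_ofPred_eq, Set.mem_compl_singleton_iff, Fin.ne_iff_vne, Fin.val_last]
  have := p.isLt
  omega

section UnaryResidue

variable {Q : Type*} {n : ℕ} [NeZero n]

theorem natCast_eq_of_iterate_eq (f : Q → Q) (s : Q) (A : Set Q) (a : Fin n)
    (hA : ∀ k : ℕ, f^[k] s ∈ A ↔ (k : Fin n) ≠ a) {i j : ℕ} (hij : f^[i] s = f^[j] s) :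
    (i : Fin n) = j := by
  set d := (a - i).val
  have hi : ((d + i : ℕ) : Fin n) = a := by simp [d]
  have hj : ((d + j : ℕ) : Fin n) = a := by
    by_contra h
    have hmem := (hA (d + j)).2 h
    rw [iterate_add_apply, ← hij, ← iterate_add_apply] at hmem
    exact (hA (d + i)).1 hmem hi
  push_cast at hi hj
  exact add_left_cancel (hi.trans hj.symm)

theorem ncard_le_of_iterate_mem_iff [Finite Q] (f : Q → Q) (s : Q) (A : Set Q) (a : Fin n)
    (hA : ∀ k : ℕ, f^[k] s ∈ A ↔ (k : Fin n) ≠ a) : n - 1 ≤ A.ncard :=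
  calc n - 1 = ({a}ᶜ : Set (Fin n)).ncard := by
        rw [Set.ncard_compl, Nat.card_fin, Set.ncard_singleton]
    _ ≤ A.ncard :=
      Set.ncard_le_ncard_of_injOn (fun x => f^[x.val] s)
        (fun x hx => (hA x.val).2 (by simpa using hx))
        (fun x _ y _ h => by simpa using natCast_eq_of_iterate_eq f s A a hA h)

end UnaryResidue

theorem stmt_17_general (t : ℕ) :
    let δ : Fin (t + 1) → Unit → Fin (t + 1) := fun p _ => p + 1
    let F : Set (Fin (t + 1)) := {p | p.val < t}
    (∀ a : Unit, Function.Bijective fun q => δ q a) ∧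
      (∀ q : Fin (t + 1), ∃ w : List Unit, w.foldl δ 0 = q) ∧
      (∀ p q : Fin (t + 1), p ≠ q →
        ∃ w : List Unit, ¬(w.foldl δ p ∈ F ↔ w.foldl δ q ∈ F)) ∧
      F.ncard = t ∧
      (∀ (Q' : Type) [Fintype Q'] (δ' : Q' → Unit → Q') (s' : Q') (F' : Set Q'),
        {w : List Unit | w.foldl δ' s' ∈ F'} = {w : List Unit | w.foldl δ 0 ∈ F} →
        t ≤ F'.ncard) := by
  intro δ F
  have hF : F = {Fin.last t}ᶜ := Fin.setOf_val_lt_eq_compl_last t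
  have hfold (w : List Unit) (p : Fin (t + 1)) : w.foldl δ p = p + w.length := by
    rw [List.foldl_unit, add_right_iterate_apply, nsmul_one]
  refine ⟨fun _ => (Equiv.addRight 1).bijective,
    fun q => ⟨List.replicate q.val (), by simp [hfold]⟩, fun p q hpq => ?_, ?_,
    fun Q' _ δ' s' F' hL => ?_⟩
  · refine ⟨List.replicate (Fin.last t - p).val (), ?_⟩
    simp only [hfold, hF, List.length_replicate, Fin.cast_val_eq_self, add_sub_cancel,
      Set.mem_compl_singleton_iff, ne_eq, not_true_eq_false, false_iff, not_not]
    exact fun h => hpq (add_right_cancel (h.trans (add_sub_cancel p _).symm)).symm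
  · rw [hF, Set.ncard_compl, Nat.card_fin, Set.ncard_singleton, Nat.add_sub_cancel]
  · simpa using ncard_le_of_iterate_mem_iff (fun q => δ' q ()) s' F' (Fin.last t) fun k => by
      simpa [List.foldl_unit, hfold, hF] using Set.ext_iff.1 hL (List.replicate k ())

/-- The unary cyclic DFA C_t is a minimal permutation automaton with t final
states, and its language has accepting-state complexity exactly t. -/
theorem stmt_17 (t : ℕ) (ht : 1 ≤ t) :
    let δ : Fin (t + 1) → Unit → Fin (t + 1) := fun p _ => p + 1
    let F : Set (Fin (t + 1)) := {p | p.val < t}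
    (∀ a : Unit, Function.Bijective fun q => δ q a) ∧
      (∀ q : Fin (t + 1), ∃ w : List Unit, w.foldl δ 0 = q) ∧
      (∀ p q : Fin (t + 1), p ≠ q →
        ∃ w : List Unit, ¬(w.foldl δ p ∈ F ↔ w.foldl δ q ∈ F)) ∧
      F.ncard = t ∧
      (∀ (Q' : Type) [Fintype Q'] (δ' : Q' → Unit → Q') (s' : Q') (F' : Set Q'),
        {w : List Unit | w.foldl δ' s' ∈ F'} = {w : List Unit | w.foldl δ 0 ∈ F} →
        t ≤ F'.ncard) :=
  stmt_17_general t
end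

section
/- Fix m, n ≥ 1 and α ≥ m, and set k = α + 1 (so k ≥ 2). Let A be the DFA on {1,…,k} over {a,b,c} with a = (1 2 … k), b = (1 2), c = id, initial state 1, final set {1,…,m}, and let L_B ⊆ {a,b,c}* be any language such that the set of permutations of {1,…,k} induced (via a, b, c = id extended to words) by words of L_B equals Stab_{S_k}(k). Then the DFA obtained from A by replacing its final set with F̃ = { q | ∃ w ∈ L_B, q·w ∈ {1,…,m} } has final set exactly {1,…,k−1} and accepts L(A)·L_B⁻¹. -/
/-- Permutation of Fin k induced by each letter. -/
def qPerm (k : ℕ) (hk : 2 ≤ k) : Fin 3 → Equiv.Perm (Fin k) :=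
  fun x =>
    if x = 0 then finRotate k
    else if x = 1 then Equiv.swap (⟨0, by omega⟩ : Fin k) ⟨1, by omega⟩
    else 1

lemma qDelta_eq_qPerm (k : ℕ) (hk : 2 ≤ k) :
    qDelta k hk = fun q x => qPerm k hk x q := by
  funext q x
  unfold qDelta qPerm
  split_ifs <;> rfl

/-- If the permutations induced by words of L_B are exactly the stabilizer of
the point k = α+1, then the quotient final set F̃ is {1,…,k-1} = {1,…,α}, and
the automaton with final set F̃ accepts L(A)·L_B⁻¹. -/
theorem stmt_19 (m n α : ℕ) (hm : 1 ≤ m) (hn : 1 ≤ n) (hα : m ≤ α)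
    (LB : Set (List (Fin 3)))
    (ρ : List (Fin 3) → Equiv.Perm (Fin (α + 1)))
    (hρ : ∀ (w : List (Fin 3)) (q : Fin (α + 1)),
      ρ w q = w.foldl (fun p x => qPerm (α + 1) (by omega) x p) q)
    (hLB : {σ : Equiv.Perm (Fin (α + 1)) | ∃ w ∈ LB, ρ w = σ} =
      {σ : Equiv.Perm (Fin (α + 1)) | σ ⟨α, by omega⟩ = ⟨α, by omega⟩}) :
    {q : Fin (α + 1) | ∃ w ∈ LB,
        w.foldl (qDelta (α + 1) (by omega)) q ∈ {x : Fin (α + 1) | x.val < m}} =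
      {x : Fin (α + 1) | x.val < α} ∧
    {x : List (Fin 3) | x.foldl (qDelta (α + 1) (by omega)) ⟨0, by omega⟩ ∈
        {q : Fin (α + 1) | ∃ w ∈ LB,
          w.foldl (qDelta (α + 1) (by omega)) q ∈ {x : Fin (α + 1) | x.val < m}}} =
      {x : List (Fin 3) | ∃ y ∈ LB,
        (x ++ y).foldl (qDelta (α + 1) (by omega)) ⟨0, by omega⟩ ∈
          {x : Fin (α + 1) | x.val < m}} := by
  have key : ∀ (w : List (Fin 3)) (q : Fin (α + 1)),
      w.foldl (qDelta (α + 1) (by omega)) q = ρ w q := by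
    intro w q
    rw [hρ, qDelta_eq_qPerm]
  constructor
  · ext q
    simp only [Set.mem_setOf_eq]
    constructor
    · rintro ⟨w, hw, hlt⟩
      rw [key] at hlt
      have hfix : ρ w ⟨α, by omega⟩ = ⟨α, by omega⟩ := by
        have : ρ w ∈ {σ : Equiv.Perm (Fin (α + 1)) | σ ⟨α, by omega⟩ = ⟨α, by omega⟩} := by
          rw [← hLB]; exact ⟨w, hw, rfl⟩
        exact this
      by_contra hq
      have hqα : q = ⟨α, by omega⟩ := by
        apply Fin.ext; simp only []
        omega
      rw [hqα, hfix] at hlt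
      simp at hlt; omega
    · intro hq
      have hα1 : 1 ≤ α := le_trans hm hα
      have h0 : ((⟨0, by omega⟩ : Fin (α + 1)) : ℕ) = 0 := rfl
      set σ := Equiv.swap q (⟨0, by omega⟩ : Fin (α + 1)) with hσ
      have hσfix : σ ∈ {σ : Equiv.Perm (Fin (α + 1)) | σ ⟨α, by omega⟩ = ⟨α, by omega⟩} := by
        simp only [Set.mem_setOf_eq, hσ]
        apply Equiv.swap_apply_of_ne_of_ne
        · intro h
          have := congrArg Fin.val h
          simp at this; omega
        · intro h
          have : (α : ℕ) = 0 := congrArg Fin.val h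
          omega
      rw [← hLB] at hσfix
      obtain ⟨w, hw, hρw⟩ := hσfix
      refine ⟨w, hw, ?_⟩
      rw [key, hρw, hσ]
      simp [Equiv.swap_apply_left]
      omega
  · ext x
    simp only [Set.mem_setOf_eq, List.foldl_append]
end
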